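/- Let X_1, X_2 be independent random variables, U_0 a constant, and suppose for each i ≥ 1 the random variable U_i satisfies the Markov condition U_i — (X_1, U^{i-1}) — X_2 when i is odd and U_i — (X_2, U^{i-1}) — X_1 when i is even, where U^{i-1} = (U_0,...,U_{i-1}). Then for every i, X_1 — U^i — X_2 is a Markov chain, i.e., X_1 and X_2 are conditionally independent given U^i. -/
import Mathlib


open Classical in
/-- Probability of an event `E` under a probability mass function `μ` on a finite
sample space `Ω`. -/
noncomputable def prEvent {Ω : Type*} [Fintype Ω] (μ : Ω → ℝ) (E : Ω → Prop) : ℝ :=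
  ∑ ω, if E ω then μ ω else 0

section Aux

variable {Ω : Type*} [Fintype Ω] (μ : Ω → ℝ)

lemma prEvent_congr {E F : Ω → Prop} (h : ∀ ω, E ω ↔ F ω) :
    prEvent μ E = prEvent μ F := by
  have : E = F := funext fun ω => propext (h ω)
  rw [this]

lemma prEvent_nonneg (hμ0 : ∀ ω, 0 ≤ μ ω) (E : Ω → Prop) : 0 ≤ prEvent μ E := by
  classical
  unfold prEvent
  exact Finset.sum_nonneg fun ω _ => by by_cases h : E ω <;> simp [h, hμ0 ω]

lemma prEvent_mono (hμ0 : ∀ ω, 0 ≤ μ ω) {E F : Ω → Prop} (h : ∀ ω, E ω → F ω) :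
    prEvent μ E ≤ prEvent μ F := by
  classical
  unfold prEvent
  apply Finset.sum_le_sum
  intro ω _
  by_cases hE : E ω
  · simp [hE, h ω hE]
  · by_cases hF : F ω <;> simp [hE, hF, hμ0 ω]

lemma prEvent_eq_zero {E : Ω → Prop} (h : ∀ ω, ¬ E ω) : prEvent μ E = 0 := by
  classical
  unfold prEvent
  exact Finset.sum_eq_zero fun ω _ => by simp [h ω]

lemma prEvent_eq_zero_of_imp (hμ0 : ∀ ω, 0 ≤ μ ω) {E F : Ω → Prop}
    (h : ∀ ω, E ω → F ω) (hF : prEvent μ F = 0) : prEvent μ E = 0 :=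
  le_antisymm (hF ▸ prEvent_mono μ hμ0 h) (prEvent_nonneg μ hμ0 E)

lemma prEvent_true (hμ1 : ∑ ω, μ ω = 1) : prEvent μ (fun _ => True) = 1 := by
  unfold prEvent
  simpa using hμ1

open Classical in
lemma prEvent_partition {α : Type*} (X : Ω → α) (E : Ω → Prop) :
    prEvent μ E = ∑ a ∈ Finset.univ.image X,
      prEvent μ (fun ω => X ω = a ∧ E ω) := by
  classical
  unfold prEvent
  rw [Finset.sum_comm]
  apply Finset.sum_congr rfl
  intro ω _
  rw [Finset.sum_eq_single (X ω)]
  · by_cases h : E ω <;> simp [h]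
  · intro b _ hb
    have : ¬ (X ω = b ∧ E ω) := fun hc => hb (hc.1.symm)
    simp [this]
  · intro h
    exact absurd (Finset.mem_image_of_mem X (Finset.mem_univ ω)) h

/-- Key algebraic step: if `V ⫫ B | (X, C)` and `X — C — B`, then `X — (V,C) — B`. -/
lemma key_step {α : Type*} (hμ0 : ∀ ω, 0 ≤ μ ω)
    (X : Ω → α) (B V C : Ω → Prop) (a : α)
    (hstar : ∀ a', prEvent μ (fun ω => V ω ∧ B ω ∧ X ω = a' ∧ C ω) *
        prEvent μ (fun ω => X ω = a' ∧ C ω) =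
      prEvent μ (fun ω => V ω ∧ X ω = a' ∧ C ω) *
        prEvent μ (fun ω => B ω ∧ X ω = a' ∧ C ω))
    (hIH : ∀ a', prEvent μ (fun ω => X ω = a' ∧ B ω ∧ C ω) * prEvent μ C =
      prEvent μ (fun ω => X ω = a' ∧ C ω) * prEvent μ (fun ω => B ω ∧ C ω)) :
    prEvent μ (fun ω => X ω = a ∧ B ω ∧ V ω ∧ C ω) *
        prEvent μ (fun ω => V ω ∧ C ω) =
      prEvent μ (fun ω => X ω = a ∧ V ω ∧ C ω) *
        prEvent μ (fun ω => B ω ∧ V ω ∧ C ω) := by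
  classical
  have hstar' : ∀ a', prEvent μ (fun ω => X ω = a' ∧ B ω ∧ V ω ∧ C ω) *
      prEvent μ (fun ω => X ω = a' ∧ C ω) =
      prEvent μ (fun ω => X ω = a' ∧ V ω ∧ C ω) *
      prEvent μ (fun ω => X ω = a' ∧ B ω ∧ C ω) := by
    intro a'
    have e1 := prEvent_congr μ (E := fun ω => X ω = a' ∧ B ω ∧ V ω ∧ C ω)
      (F := fun ω => V ω ∧ B ω ∧ X ω = a' ∧ C ω) (fun ω => by tauto)
    have e2 := prEvent_congr μ (E := fun ω => X ω = a' ∧ V ω ∧ C ω)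
      (F := fun ω => V ω ∧ X ω = a' ∧ C ω) (fun ω => by tauto)
    have e3 := prEvent_congr μ (E := fun ω => X ω = a' ∧ B ω ∧ C ω)
      (F := fun ω => B ω ∧ X ω = a' ∧ C ω) (fun ω => by tauto)
    rw [e1, e2, e3]
    exact hstar a'
  have step2 : ∀ a', prEvent μ (fun ω => X ω = a' ∧ B ω ∧ V ω ∧ C ω) * prEvent μ C =
      prEvent μ (fun ω => X ω = a' ∧ V ω ∧ C ω) * prEvent μ (fun ω => B ω ∧ C ω) := by
    intro a'
    by_cases ha : prEvent μ (fun ω => X ω = a' ∧ C ω) = 0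
    · rw [prEvent_eq_zero_of_imp μ hμ0
          (E := fun ω => X ω = a' ∧ B ω ∧ V ω ∧ C ω)
          (F := fun ω => X ω = a' ∧ C ω) (fun ω h => ⟨h.1, h.2.2.2⟩) ha,
        prEvent_eq_zero_of_imp μ hμ0
          (E := fun ω => X ω = a' ∧ V ω ∧ C ω)
          (F := fun ω => X ω = a' ∧ C ω) (fun ω h => ⟨h.1, h.2.2⟩) ha]
      ring
    · refine mul_right_cancel₀ ha ?_
      linear_combination prEvent μ C * hstar' a' +
        prEvent μ (fun ω => X ω = a' ∧ V ω ∧ C ω) * hIH a'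
  have hpartB : prEvent μ (fun ω => B ω ∧ V ω ∧ C ω) =
      ∑ a' ∈ Finset.univ.image X,
        prEvent μ (fun ω => X ω = a' ∧ B ω ∧ V ω ∧ C ω) :=
    prEvent_partition μ X _
  have hpartV : prEvent μ (fun ω => V ω ∧ C ω) =
      ∑ a' ∈ Finset.univ.image X,
        prEvent μ (fun ω => X ω = a' ∧ V ω ∧ C ω) :=
    prEvent_partition μ X _
  have step3 : prEvent μ (fun ω => B ω ∧ V ω ∧ C ω) * prEvent μ C =
      prEvent μ (fun ω => V ω ∧ C ω) * prEvent μ (fun ω => B ω ∧ C ω) := by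
    rw [hpartB, hpartV, Finset.sum_mul, Finset.sum_mul]
    exact Finset.sum_congr rfl fun a' _ => step2 a'
  by_cases hTz : prEvent μ C = 0
  · rw [prEvent_eq_zero_of_imp μ hμ0
        (E := fun ω => X ω = a ∧ B ω ∧ V ω ∧ C ω) (F := C)
        (fun ω h => h.2.2.2) hTz,
      prEvent_eq_zero_of_imp μ hμ0
        (E := fun ω => X ω = a ∧ V ω ∧ C ω) (F := C)
        (fun ω h => h.2.2) hTz]
    ring
  · refine mul_right_cancel₀ hTz ?_
    linear_combination prEvent μ (fun ω => V ω ∧ C ω) * step2 a -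
      prEvent μ (fun ω => X ω = a ∧ V ω ∧ C ω) * step3

end Aux

/-- Let `X₁, X₂` be independent random variables on a finite probability
space, `U 0` constant, and suppose each `U i` satisfies the interactive Markov
condition: `U i ⫫ X₂ | (X₁, U^{i-1})` for `i` odd and `U i ⫫ X₁ | (X₂, U^{i-1})` for
`i` even (`i ≥ 1`), where `U^{i-1} = (U 0, …, U (i-1))`.  Then for every `i`,
`X₁ — U^i — X₂` is a Markov chain: `X₁` and `X₂` are conditionally independent given
`U^i`.  Conditional independence of `A, B` given `C` is expressed as
`P(A ∩ B ∩ C) · P(C) = P(A ∩ C) · P(B ∩ C)` for all values. -/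
theorem stmt10 {Ω α₁ α₂ γ : Type*} [Fintype Ω] (μ : Ω → ℝ)
    (hμ0 : ∀ ω, 0 ≤ μ ω) (hμ1 : ∑ ω, μ ω = 1)
    (X₁ : Ω → α₁) (X₂ : Ω → α₂) (U : ℕ → Ω → γ)
    (hU0 : ∀ ω ω', U 0 ω = U 0 ω')
    (hindep : ∀ x₁ x₂,
      prEvent μ (fun ω => X₁ ω = x₁ ∧ X₂ ω = x₂) =
        prEvent μ (fun ω => X₁ ω = x₁) * prEvent μ (fun ω => X₂ ω = x₂))
    (hodd : ∀ i, 1 ≤ i → Odd i → ∀ (ui : γ) (x₁ : α₁) (x₂ : α₂) (u : ℕ → γ),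
      prEvent μ (fun ω => U i ω = ui ∧ X₂ ω = x₂ ∧ X₁ ω = x₁ ∧ ∀ j < i, U j ω = u j) *
        prEvent μ (fun ω => X₁ ω = x₁ ∧ ∀ j < i, U j ω = u j) =
      prEvent μ (fun ω => U i ω = ui ∧ X₁ ω = x₁ ∧ ∀ j < i, U j ω = u j) *
        prEvent μ (fun ω => X₂ ω = x₂ ∧ X₁ ω = x₁ ∧ ∀ j < i, U j ω = u j))
    (heven : ∀ i, 1 ≤ i → Even i → ∀ (ui : γ) (x₁ : α₁) (x₂ : α₂) (u : ℕ → γ),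
      prEvent μ (fun ω => U i ω = ui ∧ X₁ ω = x₁ ∧ X₂ ω = x₂ ∧ ∀ j < i, U j ω = u j) *
        prEvent μ (fun ω => X₂ ω = x₂ ∧ ∀ j < i, U j ω = u j) =
      prEvent μ (fun ω => U i ω = ui ∧ X₂ ω = x₂ ∧ ∀ j < i, U j ω = u j) *
        prEvent μ (fun ω => X₁ ω = x₁ ∧ X₂ ω = x₂ ∧ ∀ j < i, U j ω = u j)) :
    ∀ (i : ℕ) (x₁ : α₁) (x₂ : α₂) (u : ℕ → γ),
      prEvent μ (fun ω => X₁ ω = x₁ ∧ X₂ ω = x₂ ∧ ∀ j ≤ i, U j ω = u j) *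
        prEvent μ (fun ω => ∀ j ≤ i, U j ω = u j) =
      prEvent μ (fun ω => X₁ ω = x₁ ∧ ∀ j ≤ i, U j ω = u j) *
        prEvent μ (fun ω => X₂ ω = x₂ ∧ ∀ j ≤ i, U j ω = u j) := by
  intro i
  induction i with
  | zero =>
    intro x₁ x₂ u
    by_cases hc : ∀ ω, U 0 ω = u 0
    · have hall : ∀ ω : Ω, ∀ j ≤ 0, U j ω = u j := by
        intro ω j hj
        have hj0 : j = 0 := Nat.le_zero.mp hj
        subst hj0
        exact hc ω
      have h1 : prEvent μ (fun ω => X₁ ω = x₁ ∧ X₂ ω = x₂ ∧ ∀ j ≤ 0, U j ω = u j) =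
          prEvent μ (fun ω => X₁ ω = x₁ ∧ X₂ ω = x₂) :=
        prEvent_congr μ fun ω =>
          ⟨fun h => ⟨h.1, h.2.1⟩, fun h => ⟨h.1, h.2, hall ω⟩⟩
      have h2 : prEvent μ (fun ω : Ω => ∀ j ≤ 0, U j ω = u j) = 1 := by
        rw [prEvent_congr μ (F := fun _ => True)
          (fun ω => ⟨fun _ => trivial, fun _ => hall ω⟩)]
        exact prEvent_true μ hμ1
      have h3 : prEvent μ (fun ω => X₁ ω = x₁ ∧ ∀ j ≤ 0, U j ω = u j) =
          prEvent μ (fun ω => X₁ ω = x₁) :=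
        prEvent_congr μ fun ω => ⟨fun h => h.1, fun h => ⟨h, hall ω⟩⟩
      have h4 : prEvent μ (fun ω => X₂ ω = x₂ ∧ ∀ j ≤ 0, U j ω = u j) =
          prEvent μ (fun ω => X₂ ω = x₂) :=
        prEvent_congr μ fun ω => ⟨fun h => h.1, fun h => ⟨h, hall ω⟩⟩
      rw [h1, h2, h3, h4, mul_one]
      exact hindep x₁ x₂
    · push_neg at hc
      obtain ⟨ω₀, hω₀⟩ := hc
      have hall : ∀ ω : Ω, U 0 ω ≠ u 0 := fun ω h => hω₀ ((hU0 ω₀ ω).trans h)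
      rw [prEvent_eq_zero μ (E := fun ω => X₁ ω = x₁ ∧ X₂ ω = x₂ ∧ ∀ j ≤ 0, U j ω = u j)
          (fun ω h => hall ω (h.2.2 0 le_rfl)),
        prEvent_eq_zero μ (E := fun ω => X₁ ω = x₁ ∧ ∀ j ≤ 0, U j ω = u j)
          (fun ω h => hall ω (h.2 0 le_rfl)),
        prEvent_eq_zero μ (E := fun ω => X₂ ω = x₂ ∧ ∀ j ≤ 0, U j ω = u j)
          (fun ω h => hall ω (h.2 0 le_rfl))]
      ring
  | succ i ih =>
    intro x₁ x₂ u
    have hsplit : ∀ ω : Ω, (∀ j ≤ i + 1, U j ω = u j) ↔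
        (U (i+1) ω = u (i+1) ∧ ∀ j ≤ i, U j ω = u j) := by
      intro ω
      constructor
      · exact fun h => ⟨h _ le_rfl, fun j hj => h j (by omega)⟩
      · rintro ⟨h1, h2⟩ j hj
        by_cases hji : j ≤ i
        · exact h2 j hji
        · have : j = i + 1 := by omega
          subst this
          exact h1
    simp only [hsplit]
    rcases Nat.even_or_odd (i+1) with he | ho
    · -- even case
      have H := fun (a' : α₂) => heven (i+1) (by omega) he (u (i+1)) x₁ a' u
      simp only [Nat.lt_succ_iff] at H
      have hIH' : ∀ a' : α₂,
          prEvent μ (fun ω => X₂ ω = a' ∧ X₁ ω = x₁ ∧ ∀ j ≤ i, U j ω = u j) *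
            prEvent μ (fun ω => ∀ j ≤ i, U j ω = u j) =
          prEvent μ (fun ω => X₂ ω = a' ∧ ∀ j ≤ i, U j ω = u j) *
            prEvent μ (fun ω => X₁ ω = x₁ ∧ ∀ j ≤ i, U j ω = u j) := by
        intro a'
        have e := prEvent_congr μ
          (E := fun ω => X₂ ω = a' ∧ X₁ ω = x₁ ∧ ∀ j ≤ i, U j ω = u j)
          (F := fun ω => X₁ ω = x₁ ∧ X₂ ω = a' ∧ ∀ j ≤ i, U j ω = u j)
          (fun ω => by tauto)
        rw [e, ih x₁ a' u, mul_comm]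
      have G := key_step μ hμ0 X₂ (fun ω => X₁ ω = x₁)
        (fun ω => U (i+1) ω = u (i+1)) (fun ω => ∀ j ≤ i, U j ω = u j) x₂ H hIH'
      have e1 := prEvent_congr μ
        (E := fun ω => X₁ ω = x₁ ∧ X₂ ω = x₂ ∧ U (i+1) ω = u (i+1) ∧
          ∀ j ≤ i, U j ω = u j)
        (F := fun ω => X₂ ω = x₂ ∧ X₁ ω = x₁ ∧ U (i+1) ω = u (i+1) ∧
          ∀ j ≤ i, U j ω = u j)
        (fun ω => by tauto)
      rw [e1]
      exact G.trans (mul_comm _ _)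
    · -- odd case
      have H := fun (a' : α₁) => hodd (i+1) (by omega) ho (u (i+1)) a' x₂ u
      simp only [Nat.lt_succ_iff] at H
      exact key_step μ hμ0 X₁ (fun ω => X₂ ω = x₂)
        (fun ω => U (i+1) ω = u (i+1)) (fun ω => ∀ j ≤ i, U j ω = u j) x₁ H
        (fun a' => ih a' x₂ u)
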